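/- Let A be a discrete valuation ring with uniformizer t and residue field k, F and E free A-modules of rank n with a pairing a : F × E → A nondegenerate over the fraction field. Define F^{(j)} = {f ∈ F : a(f, e) ∈ t^j A for all e ∈ E} and let F̄^{(j)} be the image of F^{(j)} in F/tF. Then ∑_{j≥1} dim_k F̄^{(j)} = ν_t(det θ), where θ : F → E^∨ is the map induced by the pairing. -/

import Mathlib

/-! By the Smith normal form over the DVR `A` there are bases `c` of `F` and `b` of `E^∨` with
`θ (c i) = t ^ ε i • b i`, so that `ν_t(det θ) = ∑ i, ε i`. In these coordinates the condition
defining `F^{(j)}` only constrains the coordinates with `ε i < j`, and forces them into `tA`;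
hence `F̄^{(j)}` is spanned by the reductions of the `c i` with `j ≤ ε i`, which stay linearly
independent mod `t`. Thus `dim F̄^{(j)} = #{i | j ≤ ε i}`, and summing over `j ≥ 1` counts each
`i` exactly `ε i` times. -/

open IsLocalRing Module

theorem ENNReal.tsum_card_filter_lt {ι : Type*} [Fintype ι] (e : ι → ℕ) :
    ∑' j : ℕ, ((Finset.univ.filter fun i => j < e i).card : ENNReal)
      = ((∑ i, e i : ℕ) : ENNReal) := by
  simp_rw [Finset.card_filter, Nat.cast_sum, Nat.cast_ite, Nat.cast_one, Nat.cast_zero]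
  rw [Summable.tsum_finsetSum fun i _ => ENNReal.summable]
  refine Finset.sum_congr rfl fun i _ => ?_
  rw [tsum_eq_sum (s := Finset.range (e i)) fun j hj => if_neg (by simpa using hj),
    Finset.sum_ite_of_true fun j hj => Finset.mem_range.1 hj]
  simp

theorem eq_of_associated_pow_pow {M : Type*} [CommMonoidWithZero M] [IsCancelMulZero M] {q : M}
    (h0 : q ≠ 0) (hq : ¬IsUnit q) {m n : ℕ} (h : Associated (q ^ m) (q ^ n)) : m = n :=
  le_antisymm ((pow_dvd_pow_iff h0 hq).1 h.dvd) ((pow_dvd_pow_iff h0 hq).1 h.symm.dvd)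

section Basis

variable {R M N ι : Type*} [CommRing R] [AddCommGroup M] [Module R M] [AddCommGroup N] [Module R N]

theorem Module.Basis.forall_dvd_repr_iff_exists_smul [Fintype ι] (b : Basis ι R M) (x : R)
    (v : M) : (∀ i, x ∣ b.repr v i) ↔ ∃ w, v = x • w := by
  constructor
  · intro h
    choose c hc using h
    refine ⟨∑ i, c i • b i, ?_⟩
    conv_lhs => rw [← b.sum_repr v]
    simp only [Finset.smul_sum, hc, mul_smul]
  · rintro ⟨w, rfl⟩ i
    simp

theorem Module.Dual.forall_dvd_apply_iff_exists_smul [Fintype ι] [DecidableEq ι] (b : Basis ι R N)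
    (x : R) (ψ : Dual R N) : (∀ e, x ∣ ψ e) ↔ ∃ w, ψ = x • w := by
  refine ⟨fun h => (b.dualBasis.forall_dvd_repr_iff_exists_smul x ψ).1 fun i => ?_, ?_⟩
  · simpa using h (b i)
  · rintro ⟨w, rfl⟩ e
    simp

variable [Fintype ι] [DecidableEq ι] {φ : M →ₗ[R] N}

theorem LinearMap.toMatrix_eq_diagonal_of_map_eq_smul {c : Basis ι R M} {b : Basis ι R N}
    {s : ι → R} (h : ∀ i, φ (c i) = s i • b i) : toMatrix c b φ = Matrix.diagonal s := by
  ext i j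
  rw [toMatrix_apply, h, map_smul, b.repr_self, Matrix.diagonal_apply]
  by_cases hij : i = j <;> simp [hij]

theorem LinearMap.repr_apply_of_map_eq_smul {c : Basis ι R M} {b : Basis ι R N}
    {s : ι → R} (h : ∀ i, φ (c i) = s i • b i) (f : M) (i : ι) :
    b.repr (φ f) i = s i * c.repr f i := by
  rw [← toMatrix_mulVec_repr c b φ, toMatrix_eq_diagonal_of_map_eq_smul h,
    Matrix.mulVec_diagonal]

theorem LinearMap.associated_det_toMatrix (φ : M →ₗ[R] N) (b₁ c₁ : Basis ι R M)
    (b₂ c₂ : Basis ι R N) : Associated (toMatrix b₁ b₂ φ).det (toMatrix c₁ c₂ φ).det := by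
  rw [← basis_toMatrix_mul_linearMap_toMatrix_mul_basis_toMatrix b₁ c₁ b₂ c₂, Matrix.det_mul,
    Matrix.det_mul]
  have hu₁ : IsUnit (b₂.toMatrix c₂).det := by rw [← Basis.det_apply]; exact b₂.isUnit_det c₂
  have hu₂ : IsUnit (c₁.toMatrix b₁).det := by rw [← Basis.det_apply]; exact c₁.isUnit_det b₁
  exact (associated_mul_unit_left _ _ hu₂).trans (associated_unit_mul_left _ _ hu₁)

theorem LinearMap.injective_of_det_toMatrix_ne_zero [IsDomain R] (b₁ : Basis ι R M)
    (b₂ : Basis ι R N) (h : (toMatrix b₁ b₂ φ).det ≠ 0) : Function.Injective φ := by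
  rw [← ker_eq_bot, ker_eq_bot']
  intro f hf
  have hrepr : (toMatrix b₁ b₂ φ).mulVec (b₁.repr f) = 0 := by
    rw [toMatrix_mulVec_repr, hf, map_zero]; rfl
  simpa using Matrix.eq_zero_of_mulVec_eq_zero h hrepr

end Basis

section SmithNormalForm

variable {R M N ι : Type*} [CommRing R] [IsDomain R] [AddCommGroup M] [Module R M]
  [AddCommGroup N] [Module R N] [Finite ι] {φ : M →ₗ[R] N}

theorem LinearMap.exists_basis_map_eq_smul_of_injective [IsPrincipalIdealRing R]
    (hφ : Function.Injective φ) (bM : Basis ι R M) (bN : Basis ι R N) :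
    ∃ (c : Basis ι R M) (b : Basis ι R N) (s : ι → R), ∀ i, φ (c i) = s i • b i := by
  have hrank : finrank R (range φ) = finrank R N := by
    rw [← (LinearEquiv.ofInjective φ hφ).finrank_eq, finrank_eq_nat_card_basis bM,
      finrank_eq_nat_card_basis bN]
  obtain ⟨b, s, c, hc⟩ := Submodule.exists_smith_normal_form_of_rank_eq bN hrank
  refine ⟨c.map (LinearEquiv.ofInjective φ hφ).symm, b, s, fun i => ?_⟩
  rw [Basis.map_apply, ← hc, ← LinearEquiv.ofInjective_apply φ (h := hφ),
    LinearEquiv.apply_symm_apply]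

theorem IsDiscreteValuationRing.exists_basis_map_eq_pow_smul [IsDiscreteValuationRing R] {t : R}
    (ht : Irreducible t) (hφ : Function.Injective φ) (bM : Basis ι R M) (bN : Basis ι R N) :
    ∃ (c : Basis ι R M) (b : Basis ι R N) (ε : ι → ℕ), ∀ i, φ (c i) = t ^ ε i • b i := by
  obtain ⟨c, b, s, hs⟩ := φ.exists_basis_map_eq_smul_of_injective hφ bM bN
  have hs0 (i : ι) : s i ≠ 0 := fun h0 =>
    c.ne_zero i (hφ (by rw [hs, h0, zero_smul, map_zero]))
  choose ε u hu using fun i => associated_pow_irreducible (hs0 i) ht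
  refine ⟨c, b.unitsSMul fun i => (u i)⁻¹, ε, fun i => ?_⟩
  rw [Basis.unitsSMul_apply, hs, ← hu, Units.smul_def, smul_smul, mul_assoc, Units.mul_inv,
    mul_one]

end SmithNormalForm

section Residue

variable {A ι : Type*} [CommRing A] [IsLocalRing A] [Fintype ι]

theorem Module.Basis.linearIndependent_residue (c : Basis ι A (ι → A)) :
    LinearIndependent (ResidueField A) fun i j => residue A (c i j) := by
  classical
  have hunit : IsUnit (((Pi.basisFun A ι).toMatrix c).map (residue A)) := by
    rw [Matrix.isUnit_iff_isUnit_det, ← RingHom.mapMatrix_apply, ← RingHom.map_det]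
    exact ((Pi.basisFun A ι).det_apply c ▸ (Pi.basisFun A ι).isUnit_det c).map _
  exact Matrix.linearIndependent_cols_iff_isUnit.2 hunit

theorem Module.Basis.residue_eq_sum_repr (c : Basis ι A (ι → A)) (f : ι → A) :
    (fun j => residue A (f j)) = ∑ i, residue A (c.repr f i) • fun j => residue A (c i j) := by
  conv_lhs => rw [← c.sum_repr f]
  ext j
  simp [map_sum]

theorem Module.Basis.finrank_span_residue_image (c : Basis ι A (ι → A)) (S : Set (ι → A))
    (T : Finset ι) (hT : ∀ i ∈ T, c i ∈ S) (hS : ∀ f ∈ S, ∀ i ∉ T, c.repr f i ∈ maximalIdeal A) :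
    finrank (ResidueField A)
      (Submodule.span (ResidueField A) ((fun v j => residue A (v j)) '' S)) = T.card := by
  set w : ι → ι → ResidueField A := fun i j => residue A (c i j)
  have hspan : Submodule.span (ResidueField A) ((fun v j => residue A (v j)) '' S)
      = Submodule.span (ResidueField A) (w '' T) := by
    apply le_antisymm
    · rw [Submodule.span_le]
      rintro _ ⟨f, hf, rfl⟩
      beta_reduce
      rw [SetLike.mem_coe, c.residue_eq_sum_repr f]
      refine Submodule.sum_mem _ fun i _ => ?_
      by_cases hi : i ∈ T
      · exact Submodule.smul_mem _ _ (Submodule.subset_span ⟨i, hi, rfl⟩)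
      · rw [(residue_eq_zero_iff _).2 (hS f hf i hi), zero_smul]
        exact Submodule.zero_mem _
    · exact Submodule.span_mono (Set.image_subset_iff.2 fun i hi => ⟨c i, hT i hi, rfl⟩)
  rw [hspan, Set.image_eq_range]
  exact (finrank_span_eq_card (c.linearIndependent_residue.comp _ Subtype.val_injective)).trans
    (Fintype.card_coe T)

end Residue

theorem IsDiscreteValuationRing.finrank_span_residue_filtration {A ι : Type*} [CommRing A]
    [IsDomain A] [IsDiscreteValuationRing A] [Fintype ι] [DecidableEq ι] {t : A}
    (ht : Irreducible t) {a : (ι → A) →ₗ[A] Dual A (ι → A)} {c : Basis ι A (ι → A)}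
    {b : Basis ι A (Dual A (ι → A))} {ε : ι → ℕ} (h : ∀ i, a (c i) = t ^ ε i • b i) (j : ℕ) :
    finrank (ResidueField A) (Submodule.span (ResidueField A)
      ((fun v i => residue A (v i)) '' {f : ι → A | ∀ e, t ^ (j + 1) ∣ a f e}))
      = (Finset.univ.filter fun i => j < ε i).card := by
  have hmem (f : ι → A) :
      (∀ e, t ^ (j + 1) ∣ a f e) ↔ ∀ i, t ^ (j + 1) ∣ t ^ ε i * c.repr f i := by
    rw [Dual.forall_dvd_apply_iff_exists_smul (Pi.basisFun A ι),
      ← b.forall_dvd_repr_iff_exists_smul]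
    simp only [a.repr_apply_of_map_eq_smul h]
  refine c.finrank_span_residue_image _ _ (fun i hi => (hmem _).2 fun k => ?_) fun f hf i hi => ?_
  · rw [c.repr_self, Finsupp.single_apply]
    split_ifs with hik
    · subst hik
      simpa using pow_dvd_pow t (by simpa using hi)
    · simp
  · have hdvd : t ^ ε i * t ∣ t ^ ε i * c.repr f i := by
      rw [← pow_succ]
      exact (pow_dvd_pow t (by simpa using hi)).trans ((hmem f).1 hf i)
    rw [(irreducible_iff_uniformizer t).1 ht, Ideal.mem_span_singleton]
    exact (mul_dvd_mul_iff_left (pow_ne_zero _ ht.ne_zero)).1 hdvd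

theorem stmt11_general {A : Type*} [CommRing A] [IsDomain A] [IsDiscreteValuationRing A]
    (t : A) (ht : Irreducible t) (n : ℕ)
    (a : (Fin n → A) →ₗ[A] ((Fin n → A) →ₗ[A] A))
    (d : ℕ)
    (hd : Associated ((LinearMap.toMatrix (Pi.basisFun A (Fin n))
        ((Pi.basisFun A (Fin n)).dualBasis) a).det) (t ^ d)) :
    ∑' j : ℕ,
      (Module.finrank (IsLocalRing.ResidueField A)
        (Submodule.span (IsLocalRing.ResidueField A)
          ((fun v i => IsLocalRing.residue A (v i)) ''
            {f : Fin n → A | ∀ e : Fin n → A, t ^ (j + 1) ∣ a f e})) : ENNReal)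
      = (d : ENNReal) := by
  set bF := Pi.basisFun A (Fin n)
  have hdet : (LinearMap.toMatrix bF bF.dualBasis a).det ≠ 0 :=
    hd.ne_zero_iff.2 (pow_ne_zero d ht.ne_zero)
  obtain ⟨c, b, ε, hε⟩ := IsDiscreteValuationRing.exists_basis_map_eq_pow_smul ht
    (LinearMap.injective_of_det_toMatrix_ne_zero bF bF.dualBasis hdet) bF bF.dualBasis
  have hsum : ∑ i, ε i = d := by
    refine eq_of_associated_pow_pow ht.ne_zero ht.not_isUnit ?_
    have hassoc := (a.associated_det_toMatrix bF c bF.dualBasis b).symm.trans hd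
    rwa [LinearMap.toMatrix_eq_diagonal_of_map_eq_smul hε, Matrix.det_diagonal,
      Finset.prod_pow_eq_pow_sum] at hassoc
  simp_rw [IsDiscreteValuationRing.finrank_span_residue_filtration ht hε,
    ENNReal.tsum_card_filter_lt, hsum]

/-- abstract Andersen–Kaneda sum formula.  Let `A` be a DVR with
uniformizer `t` and residue field `k`, `F = E = A^n`, and `a : F × E → A` a bilinear
pairing nondegenerate over the fraction field, with induced map `θ : F → E^∨`.  Define
`F^{(j)} = {f ∈ F : a(f,e) ∈ t^j A for all e ∈ E}` and let `F̄^{(j)}` be the image of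
`F^{(j)}` in `F/tF ≅ k^n`.  If `ν_t(det θ) = d` (i.e. `det θ` is associated to `t^d`),
then `∑_{j ≥ 1} dim_k F̄^{(j)} = d`. -/
theorem stmt11 {A : Type*} [CommRing A] [IsDomain A] [IsDiscreteValuationRing A]
    (t : A) (ht : Irreducible t) (n : ℕ)
    (a : (Fin n → A) →ₗ[A] ((Fin n → A) →ₗ[A] A))
    (hnd : (LinearMap.toMatrix (Pi.basisFun A (Fin n))
        ((Pi.basisFun A (Fin n)).dualBasis) a).det ≠ 0)
    (d : ℕ)
    (hd : Associated ((LinearMap.toMatrix (Pi.basisFun A (Fin n))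
        ((Pi.basisFun A (Fin n)).dualBasis) a).det) (t ^ d)) :
    ∑' j : ℕ,
      (Module.finrank (IsLocalRing.ResidueField A)
        (Submodule.span (IsLocalRing.ResidueField A)
          ((fun v i => IsLocalRing.residue A (v i)) ''
            {f : Fin n → A | ∀ e : Fin n → A, t ^ (j + 1) ∣ a f e})) : ENNReal)
      = (d : ENNReal) :=
  stmt11_general t ht n a d hd
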